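/- arXiv:1805.11921 — 3 statements merged into one kernel-verified Lean document; each statement's English description precedes it below -/
import Mathlib

section
/- The squared number of directed walks of length l in a finite digraph G is bounded by the product of power sums of degrees: k_l^2 ≤ (∑_{v∈G} d_in(v)^l)(∑_{v∈G} d_out(v)^l), where k_l is the number of walks of length l (i.e., with l edges). -/
/-!
For `0 < i < l`, weight a walk `w = (w₀, …, w_l)` by
`Q_i(w) = d_in(w_i)^(l-i) d_out(w_i)^i P_i(w)`, where `P_i(w)` is the probability that a random
walk from `w_i`, taking `i` steps backwards along uniformly chosen in-edges and `l - i` steps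
forwards along uniformly chosen out-edges, traces out `w`.
For each `v`, `P_i` is a sub-probability distribution on the walks with `w_i = v`, so
`∑_w Q_i(w) ≤ M_i := ∑_v d_in(v)^(l-i) d_out(v)^i`. On every walk
`∏_i Q_i(w) = 1`: each pair `0 < p ≤ q < l` contributes `d_out(w_q) / d_in(w_p)` to `Q_q` and
its inverse to `Q_p`. Hölder's inequality therefore gives `k_l^(l-1) ≤ ∏_i M_i`, and the
rearrangement inequality gives `M_i M_(l-i) ≤ (∑ d_in^l)(∑ d_out^l)`.
-/

open Finset MeasureTheory
open scoped NNReal ENNReal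

theorem NNReal.sum_prod_rpow_le_prod_sum_rpow {α ι : Type*} (t : Finset α) (s : Finset ι)
    (f : ι → α → ℝ≥0) {p : ι → ℝ} (hp : ∑ i ∈ s, p i = 1) (hp₀ : ∀ i ∈ s, 0 ≤ p i) :
    ∑ a ∈ t, ∏ i ∈ s, f i a ^ p i ≤ ∏ i ∈ s, (∑ a ∈ t, f i a) ^ p i := by
  let _ : MeasurableSpace α := ⊤
  have holder := ENNReal.lintegral_prod_norm_pow_le (μ := Measure.count.restrict t) s
    (f := fun i a => (f i a : ℝ≥0∞)) (fun i _ => Measurable.of_discrete.aemeasurable) hp hp₀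
  simp only [lintegral_finset, Measure.count_singleton, mul_one] at holder
  rw [← ENNReal.coe_le_coe]
  push_cast [ENNReal.ofNNReal_finsetProd]
  convert holder using 3 with a _ i hi i hi
  · exact ENNReal.coe_rpow_of_nonneg _ (hp₀ i hi)
  · rw [ENNReal.coe_rpow_of_nonneg _ (hp₀ i hi), ENNReal.ofNNReal_finsetSum]

theorem NNReal.card_pow_card_le_prod_sum_of_prod_eq_one {α ι : Type*} (t : Finset α)
    (s : Finset ι) (z : ι → α → ℝ≥0) (hz : ∀ a ∈ t, ∏ i ∈ s, z i a = 1) :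
    (#t : ℝ≥0) ^ #s ≤ ∏ i ∈ s, ∑ a ∈ t, z i a := by
  rcases s.eq_empty_or_nonempty with rfl | hs
  · simp
  have hn : (#s : ℝ) ≠ 0 := by simpa using hs.ne_empty
  have holder := sum_prod_rpow_le_prod_sum_rpow t s z (p := fun _ => (#s : ℝ)⁻¹)
    (by simp [hn]) fun _ _ => by positivity
  simp only [finsetProd_rpow] at holder
  rw [sum_congr rfl fun a ha => by rw [hz a ha, one_rpow], sum_const, nsmul_one,
    le_rpow_inv_iff (by positivity)] at holder
  exact_mod_cast holder

section Rearrangement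

variable {R : Type*} [CommSemiring R] [LinearOrder R] [IsStrictOrderedRing R] [ExistsAddOfLE R]

theorem pow_sub_mul_pow_add_pow_sub_mul_pow_le {p q : R} (hp : 0 ≤ p) (hq : 0 ≤ q) {n i : ℕ}
    (hi : i ≤ n) : p ^ (n - i) * q ^ i + q ^ (n - i) * p ^ i ≤ p ^ n + q ^ n := by
  obtain ⟨m, rfl⟩ : ∃ m, n = m + i := ⟨n - i, by omega⟩
  rw [Nat.add_sub_cancel, pow_add, pow_add]
  rcases le_total p q with h | h
  · exact mul_add_mul_le_mul_add_mul (pow_le_pow_left₀ hp h _) (pow_le_pow_left₀ hp h _)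
  · rw [add_comm, add_comm (p ^ m * p ^ i)]
    exact mul_add_mul_le_mul_add_mul (pow_le_pow_left₀ hq h _) (pow_le_pow_left₀ hq h _)

theorem sum_pow_sub_mul_pow_mul_sum_pow_mul_pow_sub_le {ι : Type*} (s : Finset ι) {a b : ι → R}
    (ha : ∀ x ∈ s, 0 ≤ a x) (hb : ∀ x ∈ s, 0 ≤ b x) {n i : ℕ} (hi : i ≤ n) :
    (∑ x ∈ s, a x ^ (n - i) * b x ^ i) * (∑ x ∈ s, a x ^ i * b x ^ (n - i)) ≤
      (∑ x ∈ s, a x ^ n) * (∑ x ∈ s, b x ^ n) := by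
  set f : ι → ι → R := fun x y => (a x * b y) ^ (n - i) * (a y * b x) ^ i
  set g : ι → ι → R := fun x y => (a x * b y) ^ n
  have hsymm : ∑ x ∈ s, ∑ y ∈ s, (f x y + f y x) ≤ ∑ x ∈ s, ∑ y ∈ s, (g x y + g y x) :=
    sum_le_sum fun x hx => sum_le_sum fun y hy =>
      pow_sub_mul_pow_add_pow_sub_mul_pow_le (mul_nonneg (ha x hx) (hb y hy))
        (mul_nonneg (ha y hy) (hb x hx)) hi
  have hf : (∑ x ∈ s, a x ^ (n - i) * b x ^ i) * (∑ x ∈ s, a x ^ i * b x ^ (n - i)) =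
      ∑ x ∈ s, ∑ y ∈ s, f x y := by
    simp only [f, sum_mul_sum, mul_pow]
    exact sum_congr rfl fun _ _ => sum_congr rfl fun _ _ => by ring
  have hg : (∑ x ∈ s, a x ^ n) * (∑ x ∈ s, b x ^ n) = ∑ x ∈ s, ∑ y ∈ s, g x y := by
    simp only [g, sum_mul_sum, mul_pow]
  simp only [sum_add_distrib, sum_comm (s := s) (t := s) (f := fun x y => f y x),
    sum_comm (s := s) (t := s) (f := fun x y => g y x), ← hf, ← hg] at hsymm
  exact le_of_not_gt fun h => (add_lt_add h h).not_ge hsymm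

theorem sq_prod_Ico_sum_pow_mul_pow_le {ι : Type*} (s : Finset ι) {a b : ι → R}
    (ha : ∀ x ∈ s, 0 ≤ a x) (hb : ∀ x ∈ s, 0 ≤ b x) (n : ℕ) :
    (∏ i ∈ Ico 1 n, ∑ x ∈ s, a x ^ (n - i) * b x ^ i) ^ 2 ≤
      ((∑ x ∈ s, a x ^ n) * ∑ x ∈ s, b x ^ n) ^ (n - 1) := by
  set M : ℕ → R := fun i => ∑ x ∈ s, a x ^ (n - i) * b x ^ i
  have hM : ∀ i, 0 ≤ M i := fun i =>
    sum_nonneg fun x hx => mul_nonneg (pow_nonneg (ha x hx) _) (pow_nonneg (hb x hx) _)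
  have reflect : ∏ i ∈ Ico 1 n, M (n - i) = ∏ i ∈ Ico 1 n, M i := by
    rw [prod_Ico_reflect M 1 n.le_succ, Nat.add_sub_cancel, Nat.add_sub_cancel_left]
  calc (∏ i ∈ Ico 1 n, M i) ^ 2 = ∏ i ∈ Ico 1 n, M i * M (n - i) := by
        rw [sq, prod_mul_distrib, reflect]
    _ ≤ ∏ i ∈ Ico 1 n, (∑ x ∈ s, a x ^ n) * ∑ x ∈ s, b x ^ n := by
        refine prod_le_prod (fun i _ => mul_nonneg (hM i) (hM _)) fun i hi => ?_
        have hin : i ≤ n := (mem_Ico.mp hi).2.le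
        simpa only [M, Nat.sub_sub_self hin] using
          sum_pow_sub_mul_pow_mul_sum_pow_mul_pow_sub_le s ha hb hin
    _ = ((∑ x ∈ s, a x ^ n) * ∑ x ∈ s, b x ^ n) ^ (n - 1) := by rw [prod_const, Nat.card_Ico]

end Rearrangement

theorem prod_Ico_pow_mul_pow_mul_prod_inv_eq_one {G : Type*} [CommGroupWithZero G]
    (a b : ℕ → G) (l : ℕ) (ha : ∀ p ∈ Ico 1 l, a p ≠ 0) (hb : ∀ q ∈ Ico 1 l, b q ≠ 0) :
    ∏ i ∈ Ico 1 l, a i ^ (l - i) * b i ^ i *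
      ∏ j ∈ range l, (if j < i then a (j + 1) else b j)⁻¹ = 1 := by
  have pairs : ∀ i ∈ Ico 1 l, a i ^ (l - i) * b i ^ i *
      ∏ j ∈ range l, (if j < i then a (j + 1) else b j)⁻¹ =
      (∏ p ∈ Ico 1 (i + 1), b i * (a p)⁻¹) * ∏ q ∈ Ico i l, (b q * (a i)⁻¹)⁻¹ := by
    intro i hi
    have below : ∏ j ∈ range i, (if j < i then a (j + 1) else b j)⁻¹ =
        ∏ j ∈ range i, (a (j + 1))⁻¹ :=
      prod_congr rfl fun j hj => by rw [if_pos (mem_range.mp hj)]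
    have above : ∏ j ∈ Ico i l, (if j < i then a (j + 1) else b j)⁻¹ = ∏ j ∈ Ico i l, (b j)⁻¹ :=
      prod_congr rfl fun j hj => by rw [if_neg (mem_Ico.mp hj).1.not_gt]
    have shift : ∏ p ∈ Ico 1 (i + 1), (a p)⁻¹ = ∏ j ∈ range i, (a (j + 1))⁻¹ := by
      rw [prod_Ico_eq_prod_range, add_tsub_cancel_right]
      simp only [add_comm 1]
    simp only [← prod_range_mul_prod_Ico _ (mem_Ico.mp hi).2.le, below, above, prod_mul_distrib,
      prod_const, mul_inv_rev, inv_inv, shift, Nat.card_Ico, add_tsub_cancel_right]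
    ac_rfl
  rw [prod_congr rfl pairs, prod_mul_distrib,
    prod_comm' (t' := Ico 1 l) (s' := fun p => Ico p l) (by intro q p; simp only [mem_Ico]; omega),
    ← prod_mul_distrib]
  refine prod_eq_one fun p hp => ?_
  rw [← prod_mul_distrib]
  refine prod_eq_one fun q hq => mul_inv_cancel₀ (mul_ne_zero (hb q ?_) (inv_ne_zero (ha p hp)))
  simp only [mem_Ico] at hp hq ⊢
  omega

section Kernels

variable {V : Type*}

theorem sum_pi_fin_succ [Fintype V] {M : Type*} [AddCommMonoid M] (n : ℕ) (f : (Fin (n + 1) → V) → M) :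
    ∑ w, f w = ∑ v, ∑ w : Fin n → V, f (Fin.cons v w) := by
  rw [← (Fin.consEquiv fun _ => V).sum_comp, Fintype.sum_prod_type]
  rfl

theorem prod_kernel_cons (n : ℕ) (K : ℕ → V → V → ℝ≥0) (v : V) (w : Fin (n + 1) → V) :
    ∏ j : Fin (n + 1), K j ((Fin.cons v w : Fin (n + 2) → V) j.castSucc)
        ((Fin.cons v w : Fin (n + 2) → V) j.succ) =
      K 0 v (w 0) * ∏ j : Fin n, K (j + 1) (w j.castSucc) (w j.succ) := by
  simp [Fin.prod_univ_succ]

theorem sum_mul_prod_kernel_le [Fintype V] {l i : ℕ} (hi : i < l + 1) (K : ℕ → V → V → ℝ≥0)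
    (c : V → ℝ≥0) (hcol : ∀ j < i, ∀ v, ∑ u, K j u v ≤ 1)
    (hrow : ∀ j, i ≤ j → ∀ u, ∑ v, K j u v ≤ 1) :
    ∑ w : Fin (l + 1) → V, c (w ⟨i, hi⟩) * ∏ j : Fin l, K j (w j.castSucc) (w j.succ) ≤
      ∑ v, c v := by
  induction l generalizing i K c with
  | zero =>
    obtain rfl : i = 0 := by omega
    simp only [univ_eq_empty, prod_empty, mul_one]
    exact (Fintype.sum_equiv (Equiv.funUnique (Fin 1) V) _ _ fun w => rfl).le
  | succ l ih =>
    simp only [sum_pi_fin_succ (l + 1), prod_kernel_cons]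
    rcases i with _ | i
    · have mass_le_one : ∀ v, ∑ w : Fin (l + 1) → V, K 0 v (w ⟨0, by omega⟩) *
          ∏ j : Fin l, K (j + 1) (w j.castSucc) (w j.succ) ≤ 1 := fun v =>
        (ih (by omega) (fun j => K (j + 1)) (K 0 v) (by simp)
          fun j _ => hrow (j + 1) (by omega)).trans (hrow 0 le_rfl v)
      calc _ = ∑ v, c v * ∑ w : Fin (l + 1) → V, K 0 v (w ⟨0, by omega⟩) *
              ∏ j : Fin l, K (j + 1) (w j.castSucc) (w j.succ) := by
            simp [mul_sum]
        _ ≤ ∑ v, c v * 1 := by gcongr with v; exact mass_le_one v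
        _ = ∑ v, c v := by simp
    · have hcons : ∀ (v : V) (w : Fin (l + 1) → V),
          (Fin.cons v w : Fin (l + 2) → V) ⟨i + 1, hi⟩ = w ⟨i, by omega⟩ := fun v w =>
        Fin.cons_succ (α := fun _ => V) v w ⟨i, by omega⟩
      calc _ = ∑ w : Fin (l + 1) → V, (∑ v, K 0 v (w 0)) *
              (c (w ⟨i, by omega⟩) * ∏ j : Fin l, K (j + 1) (w j.castSucc) (w j.succ)) := by
            rw [sum_comm]
            simp only [hcons, sum_mul]
            exact sum_congr rfl fun _ _ => sum_congr rfl fun _ _ => by ring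
        _ ≤ ∑ w : Fin (l + 1) → V, 1 *
              (c (w ⟨i, by omega⟩) * ∏ j : Fin l, K (j + 1) (w j.castSucc) (w j.succ)) := by
            gcongr with w; exact hcol 0 (by omega) _
        _ ≤ ∑ v, c v := by
            simpa using ih (by omega) (fun j => K (j + 1)) c
              (fun j _ => hcol (j + 1) (by omega)) fun j _ => hrow (j + 1) (by omega)

end Kernels

namespace WalkCount

open Fin.NatCast

variable {V : Type*} [Fintype V] (E : V → V → Prop) [DecidableRel E]

def inDeg (v : V) : ℕ := #{u | E u v}

def outDeg (u : V) : ℕ := #{v | E u v}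

def walks (l : ℕ) : Finset (Fin (l + 1) → V) := {w | ∀ j : Fin l, E (w j.castSucc) (w j.succ)}

theorem inDeg_ne_zero {u v : V} (h : E u v) : inDeg E v ≠ 0 :=
  card_ne_zero.mpr ⟨u, by simpa using h⟩

theorem outDeg_ne_zero {u v : V} (h : E u v) : outDeg E u ≠ 0 :=
  card_ne_zero.mpr ⟨v, by simpa using h⟩

noncomputable def fwd (u v : V) : ℝ≥0 := if E u v then (outDeg E u : ℝ≥0)⁻¹ else 0

noncomputable def bwd (u v : V) : ℝ≥0 := if E u v then (inDeg E v : ℝ≥0)⁻¹ else 0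

theorem sum_fwd_le_one (u : V) : ∑ v, fwd E u v ≤ 1 := by
  simp only [fwd, sum_ite, sum_const_zero, add_zero, sum_const, nsmul_eq_mul]
  exact mul_inv_le_one

theorem sum_bwd_le_one (v : V) : ∑ u, bwd E u v ≤ 1 := by
  simp only [bwd, sum_ite, sum_const_zero, add_zero, sum_const, nsmul_eq_mul]
  exact mul_inv_le_one

noncomputable def stepKernel (i j : ℕ) : V → V → ℝ≥0 := if j < i then bwd E else fwd E

noncomputable def walkWeight (l i : ℕ) (w : Fin (l + 1) → V) : ℝ≥0 :=
  (inDeg E (w (i : Fin (l + 1))) : ℝ≥0) ^ (l - i) * (outDeg E (w (i : Fin (l + 1))) : ℝ≥0) ^ i *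
    ∏ j : Fin l, stepKernel E i j (w j.castSucc) (w j.succ)

theorem sum_walkWeight_le {l i : ℕ} (hi : i ≤ l) :
    ∑ w, walkWeight E l i w ≤ ∑ v, (inDeg E v : ℝ≥0) ^ (l - i) * (outDeg E v : ℝ≥0) ^ i := by
  have := sum_mul_prod_kernel_le (Nat.lt_succ_of_le hi) (stepKernel E i)
    (fun v => (inDeg E v : ℝ≥0) ^ (l - i) * (outDeg E v : ℝ≥0) ^ i)
    (fun j hj v => by simpa [stepKernel, hj] using sum_bwd_le_one E v)
    (fun j hj u => by simpa [stepKernel, hj.not_gt] using sum_fwd_le_one E u)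
  simpa only [walkWeight, Fin.natCast_eq_mk (Nat.lt_succ_of_le hi)] using this

theorem prod_walkWeight_eq_one {l : ℕ} {w : Fin (l + 1) → V} (hw : w ∈ walks E l) :
    ∏ i ∈ Ico 1 l, walkWeight E l i w = 1 := by
  simp only [walks, mem_filter, mem_univ, true_and] at hw
  have hkernel : ∀ i, ∏ j : Fin l, stepKernel E i j (w j.castSucc) (w j.succ) =
      ∏ j ∈ range l, (if j < i then (inDeg E (w ((j + 1 : ℕ) : Fin (l + 1))) : ℝ≥0)
        else (outDeg E (w (j : Fin (l + 1))) : ℝ≥0))⁻¹ := by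
    intro i
    rw [← Fin.prod_univ_eq_prod_range]
    refine prod_congr rfl fun j _ => ?_
    rw [← Fin.val_succ, ← Fin.val_castSucc, Fin.cast_val_eq_self, Fin.cast_val_eq_self]
    by_cases hj : (j : ℕ) < i <;> simp [stepKernel, fwd, bwd, hj, hw j]
  simp only [walkWeight, hkernel]
  refine prod_Ico_pow_mul_pow_mul_prod_inv_eq_one _ _ l (fun p hp => ?_) fun q hq => ?_
  · obtain ⟨j, rfl⟩ : ∃ j, p = j + 1 := ⟨p - 1, by grind⟩
    have := inDeg_ne_zero E (hw ⟨j, by grind⟩)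
    rw [Fin.succ_mk, ← Fin.natCast_eq_mk] at this
    exact_mod_cast this
  · have := outDeg_ne_zero E (hw ⟨q, (mem_Ico.mp hq).2⟩)
    rw [Fin.castSucc_mk, ← Fin.natCast_eq_mk] at this
    exact_mod_cast this

theorem card_walks_pow_le_prod (l : ℕ) :
    (#(walks E l) : ℝ≥0) ^ (l - 1) ≤
      ∏ i ∈ Ico 1 l, ∑ v, (inDeg E v : ℝ≥0) ^ (l - i) * (outDeg E v : ℝ≥0) ^ i :=
  calc (#(walks E l) : ℝ≥0) ^ (l - 1) = (#(walks E l) : ℝ≥0) ^ #(Ico 1 l) := by rw [Nat.card_Ico]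
    _ ≤ ∏ i ∈ Ico 1 l, ∑ w ∈ walks E l, walkWeight E l i w :=
      NNReal.card_pow_card_le_prod_sum_of_prod_eq_one _ _ _ fun _ hw =>
        prod_walkWeight_eq_one E hw
    _ ≤ ∏ i ∈ Ico 1 l, ∑ w, walkWeight E l i w := by gcongr; exact subset_univ _
    _ ≤ _ := prod_le_prod' fun i hi => sum_walkWeight_le E (mem_Ico.mp hi).2.le

theorem sq_card_walks_le_of_two_le {l : ℕ} (hl : 2 ≤ l) :
    #(walks E l) ^ 2 ≤ (∑ v, inDeg E v ^ l) * ∑ v, outDeg E v ^ l := by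
  have key : ((#(walks E l) : ℝ≥0) ^ 2) ^ (l - 1) ≤
      ((∑ v, (inDeg E v : ℝ≥0) ^ l) * ∑ v, (outDeg E v : ℝ≥0) ^ l) ^ (l - 1) :=
    calc ((#(walks E l) : ℝ≥0) ^ 2) ^ (l - 1) = ((#(walks E l) : ℝ≥0) ^ (l - 1)) ^ 2 := by
          rw [← pow_mul, ← pow_mul, mul_comm]
      _ ≤ _ := pow_le_pow_left₀ zero_le (card_walks_pow_le_prod E l) 2
      _ ≤ _ := sq_prod_Ico_sum_pow_mul_pow_le _ (fun _ _ => zero_le) (fun _ _ => zero_le) l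
  exact_mod_cast le_of_pow_le_pow_left₀ (by omega) zero_le key

theorem card_walks_one_eq_sum_outDeg : #(walks E 1) = ∑ u, outDeg E u := by
  rw [walks, card_filter, sum_pi_fin_succ]
  refine sum_congr rfl fun u _ => ?_
  rw [outDeg, card_filter]
  exact Fintype.sum_equiv (Equiv.funUnique (Fin 1) V) _ _ fun w => by simp

theorem card_walks_one_eq_sum_inDeg : #(walks E 1) = ∑ v, inDeg E v := by
  rw [card_walks_one_eq_sum_outDeg]
  simp only [outDeg, inDeg, card_filter]
  exact sum_comm

theorem sq_card_walks_of_le_one {l : ℕ} (hl : l ≤ 1) :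
    #(walks E l) ^ 2 = (∑ v, inDeg E v ^ l) * ∑ v, outDeg E v ^ l := by
  interval_cases l
  · simp [walks, sq]
  · rw [sq]
    nth_rw 1 [card_walks_one_eq_sum_inDeg]
    simp [card_walks_one_eq_sum_outDeg]

end WalkCount

theorem sq_card_walks_le_general {V : Type*} [Fintype V]
    (E : V → V → Prop) [DecidableRel E] (l : ℕ) :
    ((Finset.univ.filter fun w : Fin (l + 1) → V =>
        ∀ i : Fin l, E (w i.castSucc) (w i.succ)).card) ^ 2 ≤
      (∑ v, ((Finset.univ.filter fun u => E u v).card) ^ l) *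
      (∑ v, ((Finset.univ.filter fun u => E v u).card) ^ l) := by
  change #(WalkCount.walks E l) ^ 2 ≤
    (∑ v, WalkCount.inDeg E v ^ l) * ∑ v, WalkCount.outDeg E v ^ l
  rcases le_or_gt l 1 with hl | hl
  · exact (WalkCount.sq_card_walks_of_le_one E hl).le
  · exact WalkCount.sq_card_walks_le_of_two_le E hl

/-- The squared number of directed walks of length `l` in a finite digraph is
bounded by the product of the power sums of in- and out-degrees:
`k_l² ≤ (∑_v d_in(v)^l) · (∑_v d_out(v)^l)`. -/
theorem sq_card_walks_le {V : Type*} [Fintype V] [DecidableEq V]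
    (E : V → V → Prop) [DecidableRel E] (l : ℕ) :
    ((Finset.univ.filter fun w : Fin (l + 1) → V =>
        ∀ i : Fin l, E (w i.castSucc) (w i.succ)).card) ^ 2 ≤
      (∑ v, ((Finset.univ.filter fun u => E u v).card) ^ l) *
      (∑ v, ((Finset.univ.filter fun u => E v u).card) ^ l) :=
  sq_card_walks_le_general E l
end

section
/- The number of directed walks of length l in a finite digraph with n vertices is at most n · (d_in^max · d_out^max)^{l/2}, i.e., k_l ≤ n · (d_in^max)^{l/2} · (d_out^max)^{l/2} (equivalently k_l^2 ≤ n^2 (d_in^max · d_out^max)^l). -/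
/-!
Dropping the last vertex maps walks of length `l + 1` to walks of length `l`, with fibres of
size at most `d_out^max`, so `k_l ≤ n (d_out^max)^l`. Reversing walks, which swaps in- and
out-degrees, gives `k_l ≤ n (d_in^max)^l`, and the claim is the product of the two bounds.
-/

open Finset

section Walks

variable {V : Type*} [Fintype V] (E : V → V → Prop) [DecidableRel E]

def walks (l : ℕ) : Finset (Fin (l + 1) → V) :=
  univ.filter fun w => ∀ i : Fin l, E (w i.castSucc) (w i.succ)

def maxOutDegree : ℕ :=
  univ.sup fun v => #(univ.filter fun u => E v u)

variable {E}

@[simp]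
lemma mem_walks {l : ℕ} {w : Fin (l + 1) → V} :
    w ∈ walks E l ↔ ∀ i : Fin l, E (w i.castSucc) (w i.succ) := by
  simp [walks]

lemma init_mem_walks {l : ℕ} {w : Fin (l + 2) → V} (hw : w ∈ walks E (l + 1)) :
    Fin.init w ∈ walks E l := by
  simp only [mem_walks, Fin.init] at hw ⊢
  intro i
  simpa only [Fin.succ_castSucc] using hw i.castSucc

lemma filter_walks_init_eq_subset [DecidableEq V] {l : ℕ} (b : Fin (l + 1) → V) :
    {w ∈ walks E (l + 1) | Fin.init w = b} ⊆
      (univ.filter fun u => E (b (Fin.last l)) u).image fun u => Fin.snoc b u := by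
  intro w hw
  obtain ⟨hwalk, rfl⟩ := mem_filter.1 hw
  refine mem_image.2 ⟨w (Fin.last _), mem_filter.2 ⟨mem_univ _, ?_⟩, Fin.snoc_init_self w⟩
  simpa only [Fin.init, Fin.succ_last] using mem_walks.1 hwalk (Fin.last l)

lemma card_filter_walks_init_eq_le [DecidableEq V] {l : ℕ} (b : Fin (l + 1) → V) :
    #{w ∈ walks E (l + 1) | Fin.init w = b} ≤ maxOutDegree E :=
  calc #{w ∈ walks E (l + 1) | Fin.init w = b}
      ≤ #(univ.filter fun u => E (b (Fin.last l)) u) :=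
        (card_le_card (filter_walks_init_eq_subset b)).trans card_image_le
    _ ≤ maxOutDegree E := le_sup (f := fun v => #(univ.filter fun u => E v u)) (mem_univ _)

lemma card_walks_succ_le (l : ℕ) : #(walks E (l + 1)) ≤ maxOutDegree E * #(walks E l) := by
  classical
  exact card_le_mul_card_image_of_maps_to (fun _ => init_mem_walks) _
    fun b _ => card_filter_walks_init_eq_le b

lemma card_walks_le (l : ℕ) : #(walks E l) ≤ Fintype.card V * maxOutDegree E ^ l := by
  induction l with
  | zero => simpa using card_le_univ (walks E 0)
  | succ l ih =>
    calc #(walks E (l + 1)) ≤ maxOutDegree E * #(walks E l) := card_walks_succ_le l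
      _ ≤ maxOutDegree E * (Fintype.card V * maxOutDegree E ^ l) := Nat.mul_le_mul_left _ ih
      _ = Fintype.card V * maxOutDegree E ^ (l + 1) := by ring

lemma comp_rev_mem_walks_flip {l : ℕ} {w : Fin (l + 1) → V} (hw : w ∈ walks E l) :
    w ∘ Fin.rev ∈ walks (fun u v => E v u) l := by
  simp only [mem_walks, Function.comp_apply, Fin.rev_succ, Fin.rev_castSucc] at hw ⊢
  exact fun i => hw i.rev

lemma card_walks_flip (l : ℕ) : #(walks (fun u v => E v u) l) = #(walks E l) :=
  card_nbij' (· ∘ Fin.rev) (· ∘ Fin.rev) (fun _ => comp_rev_mem_walks_flip)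
    (fun _ => comp_rev_mem_walks_flip) (fun w _ => by simp [Function.comp_def])
    (fun w _ => by simp [Function.comp_def])

end Walks

theorem sq_card_walks_le_max_degrees_general {V : Type*} [Fintype V]
    (E : V → V → Prop) [DecidableRel E] (l : ℕ) :
    ((Finset.univ.filter fun w : Fin (l + 1) → V =>
        ∀ i : Fin l, E (w i.castSucc) (w i.succ)).card) ^ 2 ≤
      (Fintype.card V) ^ 2 *
        ((Finset.univ.sup fun v => (Finset.univ.filter fun u => E u v).card) *
         (Finset.univ.sup fun v => (Finset.univ.filter fun u => E v u).card)) ^ l := by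
  have h_in : #(walks E l) ≤ Fintype.card V * maxOutDegree (fun u v => E v u) ^ l :=
    card_walks_flip (E := E) l ▸ card_walks_le l
  have h_out : #(walks E l) ≤ Fintype.card V * maxOutDegree E ^ l := card_walks_le l
  calc #(walks E l) ^ 2 = #(walks E l) * #(walks E l) := sq _
    _ ≤ (Fintype.card V * maxOutDegree (fun u v => E v u) ^ l) *
          (Fintype.card V * maxOutDegree E ^ l) := Nat.mul_le_mul h_in h_out
    _ = _ := by unfold maxOutDegree; ring

/-- The number of directed walks of length `l` in a finite digraph on `n` vertices
is at most `n · (d_in^max · d_out^max)^{l/2}`; equivalently,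
`k_l² ≤ n² · (d_in^max · d_out^max)^l`. -/
theorem sq_card_walks_le_max_degrees {V : Type*} [Fintype V] [DecidableEq V]
    (E : V → V → Prop) [DecidableRel E] (l : ℕ) :
    ((Finset.univ.filter fun w : Fin (l + 1) → V =>
        ∀ i : Fin l, E (w i.castSucc) (w i.succ)).card) ^ 2 ≤
      (Fintype.card V) ^ 2 *
        ((Finset.univ.sup fun v => (Finset.univ.filter fun u => E u v).card) *
         (Finset.univ.sup fun v => (Finset.univ.filter fun u => E v u).card)) ^ l :=
  sq_card_walks_le_max_degrees_general E l
end

section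
/- For the empirical distribution D^m of m i.i.d. samples from a distribution D on a finite set of size η, and for any ε > 0, δ ∈ (0,1], if m ≥ (2/ε²)(log(2^η − 2) − log δ) then P(‖D^m − D‖_1 ≥ ε) ≤ δ. -/
/-!
If `‖D^m − D‖₁ ≥ ε`, then, both being probability vectors, the set `S` of atoms where `D^m`
exceeds `D` is a proper nonempty subset with `D^m(S) − D(S) ≥ ε / 2`. For a fixed `S`,
`m (D^m(S) − D(S))` is a sum of `m` independent centred variables with values in an interval of
length one, so Hoeffding's inequality bounds the probability that it reaches `m ε / 2` by
`exp (−m ε² / 2)`. A union bound over the `2^η − 2` proper nonempty subsets finishes the proof.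
-/

noncomputable def empDist {A : Type*} [DecidableEq A] {m : ℕ}
    (x : Fin m → A) (a : A) : ℝ :=
  (Finset.univ.filter fun j => x j = a).card / m

open MeasureTheory ProbabilityTheory Finset Real

lemma MeasureTheory.Measure.real_pi_finset {ι : Type*} [Fintype ι] {α : ι → Type*}
    [∀ i, MeasurableSpace (α i)] [∀ i, MeasurableSingletonClass (α i)]
    (μ : ∀ i, Measure (α i)) [∀ i, IsFiniteMeasure (μ i)] (E : Finset (∀ i, α i)) :
    (Measure.pi μ).real E = ∑ x ∈ E, ∏ i, (μ i).real {x i} := by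
  rw [← sum_measureReal_singleton]
  simp only [measureReal_def, Measure.pi_singleton, ENNReal.toReal_prod]

lemma measureReal_pi_sum_sub_integral_ge_le {α : Type*} [MeasurableSpace α] {ν : Measure α}
    [IsProbabilityMeasure ν] {ι : Type*} [Fintype ι] {f : α → ℝ} (hf : Measurable f)
    (hf01 : ∀ a, f a ∈ Set.Icc 0 1) {t : ℝ} (ht : 0 ≤ t) :
    (Measure.pi fun _ : ι => ν).real {ω | t ≤ ∑ i, (f (ω i) - ν[f])} ≤
      exp (-2 * t ^ 2 / Fintype.card ι) := by
  have hsubG : HasSubgaussianMGF (fun a => f a - ν[f]) ((‖(1 : ℝ) - 0‖₊ / 2) ^ 2) ν :=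
    hasSubgaussianMGF_of_mem_Icc hf.aemeasurable (ae_of_all _ hf01)
  have hindep : iIndepFun (fun i (ω : ι → α) => f (ω i) - ν[f]) (Measure.pi fun _ => ν) :=
    iIndepFun_pi (Ω := fun _ => α) (μ := fun _ => ν) (X := fun _ (a : α) => f a - ν[f])
      fun _ => (hf.sub_const _).aemeasurable
  have hsubG_pi : ∀ i ∈ (univ : Finset ι), HasSubgaussianMGF (fun ω : ι → α => f (ω i) - ν[f])
      ((‖(1 : ℝ) - 0‖₊ / 2) ^ 2) (Measure.pi fun _ => ν) := by
    intro i _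
    refine HasSubgaussianMGF.of_map (Y := fun ω : ι → α => ω i) (X := fun a => f a - ν[f])
      (measurable_pi_apply i).aemeasurable ?_
    rwa [(measurePreserving_eval (fun _ => ν) i).map_eq]
  refine (HasSubgaussianMGF.measure_sum_ge_le_of_iIndepFun hindep hsubG_pi ht).trans_eq ?_
  congr 1
  simp only [sub_zero, nnnorm_one, one_div, inv_pow, sum_const, card_univ, nsmul_eq_mul,
    NNReal.coe_mul, NNReal.coe_natCast, NNReal.coe_inv, NNReal.coe_pow, NNReal.coe_ofNat, neg_mul]
  ring

section L1

variable {A : Type*} [Fintype A]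

lemma sum_abs_sub_eq_two_mul_sum_filter_lt {P Q : A → ℝ} (h : ∑ a, P a = ∑ a, Q a) :
    ∑ a, |P a - Q a| = 2 * ∑ a with Q a < P a, (P a - Q a) := by
  have key : ∀ a, |P a - Q a| = 2 * (if Q a < P a then P a - Q a else 0) - (P a - Q a) := by
    intro a
    split_ifs with hlt
    · rw [abs_of_pos (sub_pos.2 hlt)]; ring
    · rw [abs_of_nonpos (by linarith [not_lt.1 hlt])]; ring
  rw [sum_congr rfl fun a _ => key a, sum_sub_distrib, ← mul_sum, sum_filter, sum_sub_distrib, h,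
    sub_self, sub_zero]

lemma exists_ne_empty_ne_univ_le_sum_sub {P Q : A → ℝ} (h : ∑ a, P a = ∑ a, Q a) {ε : ℝ}
    (hε : 0 < ε) (hPQ : ε ≤ ∑ a, |P a - Q a|) :
    ∃ S : Finset A, S ≠ ∅ ∧ S ≠ univ ∧ ε / 2 ≤ ∑ a ∈ S, (P a - Q a) := by
  have hS : ε / 2 ≤ ∑ a with Q a < P a, (P a - Q a) := by
    rw [sum_abs_sub_eq_two_mul_sum_filter_lt h] at hPQ
    linarith
  refine ⟨_, ?_, ?_, hS⟩ <;> intro hS' <;> rw [hS'] at hS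
  · rw [sum_empty] at hS
    linarith
  · rw [sum_sub_distrib, h, sub_self] at hS
    linarith

end L1

section Empirical

variable {A : Type*} [DecidableEq A] {m : ℕ}

lemma mul_sum_empDist (hm : m ≠ 0) (x : Fin m → A) (S : Finset A) :
    m * ∑ a ∈ S, empDist x a = ∑ j, (S : Set A).indicator 1 (x j) := by
  simp only [empDist]
  rw [← sum_div, mul_div_cancel₀ _ (Nat.cast_ne_zero.2 hm : (m : ℝ) ≠ 0)]
  simp only [card_filter, Nat.cast_sum, Nat.cast_ite, Nat.cast_one, Nat.cast_zero]
  rw [sum_comm]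
  simp [Set.indicator_apply]

lemma sum_empDist [Fintype A] (hm : m ≠ 0) (x : Fin m → A) : ∑ a, empDist x a = 1 := by
  have h := mul_sum_empDist hm x univ
  simp only [coe_univ, Set.indicator_univ, Pi.one_apply, sum_const, card_univ, Fintype.card_fin,
    nsmul_eq_mul, mul_one] at h
  exact (mul_eq_left₀ (Nat.cast_ne_zero.2 hm)).1 h

lemma setOf_le_sum_abs_empDist_sub_subset [Fintype A] (hm : m ≠ 0) {Q : A → ℝ}
    (hQ : ∑ a, Q a = 1) {ε : ℝ} (hε : 0 < ε) :
    {x : Fin m → A | ε ≤ ∑ a, |empDist x a - Q a|} ⊆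
      ⋃ S ∈ (univ : Finset (Finset A)) \ {∅, univ},
        {x | m * ε / 2 ≤ ∑ j, ((S : Set A).indicator 1 (x j) - ∑ a ∈ S, Q a)} := by
  intro x hx
  obtain ⟨S, hS₀, hS₁, hSε⟩ :=
    exists_ne_empty_ne_univ_le_sum_sub ((sum_empDist hm x).trans hQ.symm) hε hx
  simp only [Set.mem_iUnion, mem_sdiff, mem_univ, mem_insert, mem_singleton, true_and]
  refine ⟨S, by tauto, ?_⟩
  have hm' : (0 : ℝ) < m := Nat.cast_pos.2 (Nat.pos_of_ne_zero hm)
  rw [Set.mem_ofPred_eq, sum_sub_distrib, ← mul_sum_empDist hm, sum_const, card_univ,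
    Fintype.card_fin, nsmul_eq_mul, ← mul_sub, ← sum_sub_distrib]
  nlinarith

end Empirical

lemma card_sdiff_empty_univ (A : Type*) [Fintype A] [DecidableEq A] [Nonempty A] :
    #((univ : Finset (Finset A)) \ {∅, univ}) = 2 ^ Fintype.card A - 2 := by
  rw [card_sdiff_of_subset (subset_univ _), card_univ, Fintype.card_finset,
    card_pair univ_nonempty.ne_empty.symm]

lemma one_le_two_pow_sub_two {n : ℕ} (hn : 2 ≤ n) : (1 : ℝ) ≤ 2 ^ n - 2 := by
  have : (2 : ℝ) ^ 2 ≤ 2 ^ n := pow_le_pow_right₀ one_le_two hn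
  linarith

theorem measureReal_pi_sum_abs_empDist_sub_ge_le {A : Type*} [Fintype A] [DecidableEq A]
    [MeasurableSpace A] [MeasurableSingletonClass A] (μ : Measure A) [IsProbabilityMeasure μ]
    (hA : 2 ≤ Fintype.card A) {ε : ℝ} (hε : 0 < ε) (m : ℕ) :
    (Measure.pi fun _ : Fin m => μ).real {x | ε ≤ ∑ a, |empDist x a - μ.real {a}|} ≤
      (2 ^ Fintype.card A - 2) * exp (-(m * ε ^ 2 / 2)) := by
  rcases eq_or_ne m 0 with rfl | hm
  · simpa using measureReal_le_one.trans (one_le_two_pow_sub_two hA)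
  have : Nonempty A := Fintype.card_pos_iff.1 (by omega)
  have hmean : ∀ S : Finset A, μ[(S : Set A).indicator 1] = ∑ a ∈ S, μ.real {a} := fun S => by
    rw [integral_indicator_one S.measurableSet, sum_measureReal_singleton]
  calc _ ≤ (Measure.pi fun _ : Fin m => μ).real (⋃ S ∈ (univ : Finset (Finset A)) \ {∅, univ},
          {x | m * ε / 2 ≤ ∑ j, ((S : Set A).indicator 1 (x j) - ∑ a ∈ S, μ.real {a})}) :=
        measureReal_mono (setOf_le_sum_abs_empDist_sub_subset hm (by simp) hε)
          (measure_ne_top _ _)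
    _ ≤ ∑ S ∈ (univ : Finset (Finset A)) \ {∅, univ}, exp (-(m * ε ^ 2 / 2)) := by
        refine (measureReal_biUnion_finset_le _ _).trans (sum_le_sum fun S _ => ?_)
        rw [← hmean]
        refine (measureReal_pi_sum_sub_integral_ge_le (measurable_of_countable _)
          (fun a => ?_) (by positivity)).trans_eq ?_
        · by_cases h : a ∈ (S : Set A) <;> simp [h]
        · rw [Fintype.card_fin]
          field_simp
    _ = _ := by
        rw [sum_const, card_sdiff_empty_univ, nsmul_eq_mul,
          Nat.cast_sub (Nat.le_self_pow (by omega) 2)]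
        norm_num

lemma mul_exp_neg_le_of_le {K δ ε x : ℝ} (hK : 0 < K) (hδ : 0 < δ) (hε : 0 < ε)
    (hx : 2 / ε ^ 2 * (log K - log δ) ≤ x) : K * exp (-(x * ε ^ 2 / 2)) ≤ δ := by
  have hlog : log K - log δ ≤ x * ε ^ 2 / 2 := by
    rw [div_mul_eq_mul_div, div_le_iff₀ (by positivity)] at hx
    linarith
  calc K * exp (-(x * ε ^ 2 / 2)) ≤ K * exp (log δ - log K) := by gcongr; linarith
    _ = δ := by rw [exp_sub, exp_log hδ, exp_log hK]; field_simp

theorem sampling_bound_general {A : Type*} [Fintype A] [DecidableEq A]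
    (D : A → ℝ) (hD : ∀ a, 0 ≤ D a) (hDs : ∑ a, D a = 1)
    (hη : 2 ≤ Fintype.card A)
    (ε δ : ℝ) (hε : 0 < ε) (hδ0 : 0 < δ) (m : ℕ)
    (hm : (2 / ε ^ 2) * (Real.log (2 ^ Fintype.card A - 2) - Real.log δ) ≤ m) :
    ∑ x ∈ Finset.univ.filter
        (fun x : Fin m → A => ε ≤ ∑ a, |empDist x a - D a|),
      ∏ j, D (x j) ≤ δ := by
  let _ : MeasurableSpace A := ⊤
  have hsum : ∑ a, ENNReal.ofReal (D a) = 1 := by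
    rw [← ENNReal.ofReal_sum_of_nonneg fun a _ => hD a, hDs, ENNReal.ofReal_one]
  set μ := (PMF.ofFintype _ hsum).toMeasure
  have hμ : ∀ a, μ.real {a} = D a := fun a => by simp [μ, measureReal_def, hD]
  have hdev := measureReal_pi_sum_abs_empDist_sub_ge_le μ hη hε m
  rw [← coe_filter_univ, Measure.real_pi_finset] at hdev
  simp only [hμ] at hdev
  exact hdev.trans (mul_exp_neg_le_of_le (by linarith [one_le_two_pow_sub_two hη]) hδ0 hε hm)

/-- Sampling bound: for `m` i.i.d. samples from a distribution `D` on a finite set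
of size `η`, if `m ≥ (2/ε²)(log(2^η − 2) − log δ)` then
`P(‖D^m − D‖₁ ≥ ε) ≤ δ`. The i.i.d. sampling is modeled by the product
distribution on `Fin m → A`, assigning probability `∏ j, D (x j)` to a sample `x`. -/
theorem sampling_bound {A : Type*} [Fintype A] [DecidableEq A]
    (D : A → ℝ) (hD : ∀ a, 0 ≤ D a) (hDs : ∑ a, D a = 1)
    (hη : 2 ≤ Fintype.card A)
    (ε δ : ℝ) (hε : 0 < ε) (hδ0 : 0 < δ) (hδ1 : δ ≤ 1) (m : ℕ)
    (hm : (2 / ε ^ 2) * (Real.log (2 ^ Fintype.card A - 2) - Real.log δ) ≤ m) :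
    ∑ x ∈ Finset.univ.filter
        (fun x : Fin m → A => ε ≤ ∑ a, |empDist x a - D a|),
      ∏ j, D (x j) ≤ δ :=
  sampling_bound_general D hD hDs hη ε δ hε hδ0 m hm
end
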